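/- arXiv:1806.07473 — 2 statements merged into one kernel-verified Lean document; each statement's English description precedes it below -/
import Mathlib

section
/- Let A, B ∈ ℝ^{n×n} with A positive semidefinite, and ρ, ε > 0 satisfy 0 ≤ B ≤ ρA and ‖ρA − B‖ ≤ ε‖A‖. Then there exists c > 0 (depending only on A) such that B ≥ (ρ − εc)A. -/
/-!
Diagonalize `A` in an orthonormal eigenbasis and let `λ` be its smallest positive eigenvalue.
Every `x` splits as `x = z + y` with `A z = 0` and `λ ‖y‖² ≤ xᵀ A x`. Since `B` and
`M := ρ A - B` are positive semidefinite and add up to `ρ A`, `M` vanishes on `ker A`; as `M` is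
symmetric, `xᵀ M x = yᵀ M y ≤ ‖M‖ ‖y‖² ≤ (ε ‖A‖ / λ) xᵀ A x`. So `c = ‖A‖ / λ` works.
-/
open scoped InnerProductSpace ComplexOrder
open RCLike Finset
open LinearMap (ker mem_ker)

variable {𝕜 E : Type*} [RCLike 𝕜] [NormedAddCommGroup E] [InnerProductSpace 𝕜 E]

lemma Finite.exists_pos_forall_le_of_pos {ι : Type*} [Finite ι] (f : ι → ℝ) :
    ∃ δ > 0, ∀ i, 0 < f i → δ ≤ f i := by
  classical
  have := Fintype.ofFinite ι
  rcases (univ.filter fun i => 0 < f i).eq_empty_or_nonempty with h | h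
  · exact ⟨1, one_pos, fun i hi => absurd hi (filter_eq_empty_iff.1 h (mem_univ i))⟩
  · obtain ⟨j, hj, hmin⟩ := exists_min_image _ f h
    exact ⟨f j, (mem_filter.1 hj).2, fun i hi => hmin i (mem_filter.2 ⟨mem_univ i, hi⟩)⟩

namespace LinearMap

lemma IsSymmetric.inner_map_self_sub_of_mem_ker {S : E →ₗ[𝕜] E} (hS : S.IsSymmetric) {z : E}
    (hz : z ∈ ker S) (x : E) : ⟪S (x - z), x - z⟫_𝕜 = ⟪S x, x⟫_𝕜 := by
  rw [mem_ker] at hz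
  rw [map_sub, hz, sub_zero, inner_sub_right, hS x z, hz, inner_zero_right, sub_zero]

variable [FiniteDimensional 𝕜 E] {T : E →ₗ[𝕜] E}

lemma IsSymmetric.re_inner_apply_self_eq_sum (hT : T.IsSymmetric) (x : E) :
    re ⟪T x, x⟫_𝕜 = ∑ i, hT.eigenvalues rfl i * ‖(hT.eigenvectorBasis rfl).repr x i‖ ^ 2 := by
  rw [← (hT.eigenvectorBasis rfl).repr.inner_map_map, PiLp.inner_apply, map_sum]
  refine sum_congr rfl fun i _ => ?_
  rw [hT.eigenvectorBasis_apply_self_apply, inner_apply, map_mul (starRingEnd 𝕜), conj_ofReal,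
    mul_left_comm, mul_conj, ← ofReal_pow, ← ofReal_mul, ofReal_re]

lemma IsPositive.apply_eq_zero_of_re_inner_eq_zero (hT : T.IsPositive) {x : E}
    (hx : re ⟪T x, x⟫_𝕜 = 0) : T x = 0 := by
  set b := hT.isSymmetric.eigenvectorBasis rfl
  set e := hT.isSymmetric.eigenvalues rfl
  have hterms : ∀ i, e i * ‖b.repr x i‖ ^ 2 = 0 := by
    rw [hT.isSymmetric.re_inner_apply_self_eq_sum] at hx
    exact fun i => (sum_eq_zero_iff_of_nonneg fun j _ =>
      mul_nonneg (hT.nonneg_eigenvalues rfl j) (sq_nonneg _)).1 hx i (mem_univ i)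
  apply b.repr.injective
  ext i
  rw [hT.isSymmetric.eigenvectorBasis_apply_self_apply, map_zero, PiLp.zero_apply]
  rcases mul_eq_zero.1 (hterms i) with he | hc
  · exact mul_eq_zero_of_left (by exact_mod_cast he) _
  · exact mul_eq_zero_of_right _ (by simpa using hc)

lemma IsPositive.ker_add_le_ker_left {M S : E →ₗ[𝕜] E} (hM : M.IsPositive) (hS : S.IsPositive) :
    ker (M + S) ≤ ker M := by
  intro z hz
  rw [mem_ker, add_apply] at hz
  apply hM.apply_eq_zero_of_re_inner_eq_zero
  have hsum : re ⟪M z, z⟫_𝕜 + re ⟪S z, z⟫_𝕜 = 0 := by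
    rw [← map_add, ← inner_add_left, hz, inner_zero_left, map_zero]
  linarith [hM.re_inner_nonneg_left z, hS.re_inner_nonneg_left z]

lemma IsPositive.exists_coercive_mod_ker (hT : T.IsPositive) :
    ∃ δ > 0, ∀ x, ∃ z ∈ ker T, δ * ‖x - z‖ ^ 2 ≤ re ⟪T x, x⟫_𝕜 := by
  set b := hT.isSymmetric.eigenvectorBasis rfl
  set e := hT.isSymmetric.eigenvalues rfl
  obtain ⟨δ, hδ, hδe⟩ := Finite.exists_pos_forall_le_of_pos e
  refine ⟨δ, hδ, fun x => ?_⟩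
  set z := b.repr.symm (WithLp.toLp 2 fun i => if e i = 0 then b.repr x i else 0)
  have hz : ∀ i, b.repr z i = if e i = 0 then b.repr x i else 0 := by simp [z]
  refine ⟨z, ?_, ?_⟩
  · rw [mem_ker]
    apply b.repr.injective
    ext i
    rw [hT.isSymmetric.eigenvectorBasis_apply_self_apply, hz]
    split_ifs with h <;> simp [e, h]
  · rw [← b.repr.norm_map, EuclideanSpace.norm_sq_eq, mul_sum,
      hT.isSymmetric.re_inner_apply_self_eq_sum]
    refine sum_le_sum fun i _ => ?_
    rw [map_sub, PiLp.sub_apply, hz]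
    split_ifs with h
    · simp [e, h]
    · rw [sub_zero]
      exact mul_le_mul_of_nonneg_right
        (hδe i ((hT.nonneg_eigenvalues rfl i).lt_of_ne' h)) (sq_nonneg _)

end LinearMap

namespace ContinuousLinearMap

lemma re_inner_map_self_le (S : E →L[𝕜] E) (x : E) : re ⟪S x, x⟫_𝕜 ≤ ‖S‖ * ‖x‖ ^ 2 :=
  calc re ⟪S x, x⟫_𝕜 ≤ ‖S x‖ * ‖x‖ := re_inner_le_norm _ _
    _ ≤ ‖S‖ * ‖x‖ * ‖x‖ := by gcongr; exact S.le_opNorm x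
    _ = ‖S‖ * ‖x‖ ^ 2 := by ring

variable [FiniteDimensional 𝕜 E] {T : E →L[𝕜] E}

theorem IsPositive.exists_pos_re_inner_le_of_ker_le (hT : T.IsPositive) :
    ∃ δ > 0, ∀ M : E →L[𝕜] E, M.IsSymmetric → ker (T : E →ₗ[𝕜] E) ≤ ker (M : E →ₗ[𝕜] E) →
      ∀ x, re ⟪M x, x⟫_𝕜 ≤ ‖M‖ / δ * re ⟪T x, x⟫_𝕜 := by
  obtain ⟨δ, hδ, hT'⟩ := hT.toLinearMap.exists_coercive_mod_ker
  refine ⟨δ, hδ, fun M hM hker x => ?_⟩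
  obtain ⟨z, hz, hxz⟩ := hT' x
  calc re ⟪M x, x⟫_𝕜 = re ⟪M (x - z), x - z⟫_𝕜 := by
        rw [← coe_coe, hM.inner_map_self_sub_of_mem_ker (hker hz)]
    _ ≤ ‖M‖ * ‖x - z‖ ^ 2 := M.re_inner_map_self_le _
    _ ≤ ‖M‖ / δ * re ⟪T x, x⟫_𝕜 := by
        rw [div_mul_eq_mul_div, le_div_iff₀ hδ, mul_assoc, mul_comm _ δ]
        exact mul_le_mul_of_nonneg_left hxz (norm_nonneg M)

theorem IsPositive.exists_pos_isPositive_sub_smul (hT : T.IsPositive) :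
    ∃ c > 0, ∀ (S : E →L[𝕜] E) (ρ ε : ℝ), S.IsPositive → ((ρ : 𝕜) • T - S).IsPositive →
      ‖(ρ : 𝕜) • T - S‖ ≤ ε * ‖T‖ → (S - ((ρ - ε * c : ℝ) : 𝕜) • T).IsPositive := by
  rcases eq_or_ne T 0 with rfl | hT0
  · exact ⟨1, one_pos, fun S _ _ hS _ _ => by simpa using hS⟩
  obtain ⟨δ, hδ, hle⟩ := hT.exists_pos_re_inner_le_of_ker_le
  refine ⟨‖T‖ / δ, div_pos (norm_pos_iff.2 hT0) hδ, fun S ρ ε hS hM hnorm => ?_⟩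
  set M := (ρ : 𝕜) • T - S
  have hker : ker (T : E →ₗ[𝕜] E) ≤ ker (M : E →ₗ[𝕜] E) := fun z hz =>
    hM.toLinearMap.ker_add_le_ker_left hS.toLinearMap (by simp [M, mem_ker.1 hz])
  have hMT : ‖M‖ / δ ≤ ε * (‖T‖ / δ) := by
    rw [mul_div_assoc']; exact div_le_div_of_nonneg_right hnorm hδ.le
  have hsub : S - ((ρ - ε * (‖T‖ / δ) : ℝ) : 𝕜) • T = ((ε * (‖T‖ / δ) : ℝ) : 𝕜) • T - M := by
    simp only [M, ofReal_sub, sub_smul]; abel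
  rw [hsub]
  refine ⟨(hT.isSymmetric.smul (conj_ofReal _)).sub hM.isSymmetric, fun x => ?_⟩
  have hx := hle M hM.isSymmetric hker x
  rw [reApplyInnerSelf_apply, sub_apply, smul_apply, inner_sub_left, inner_smul_left,
    conj_ofReal, map_sub, re_ofReal_mul]
  nlinarith [hT.re_inner_nonneg_left x]

end ContinuousLinearMap

namespace Matrix

variable {n : Type*} [Fintype n] [DecidableEq n]

lemma isPositive_toEuclideanCLM_iff {A : Matrix n n 𝕜} :
    (toEuclideanCLM (n := n) (𝕜 := 𝕜) A).IsPositive ↔ A.PosSemidef := by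
  rw [← ContinuousLinearMap.isPositive_toLinearMap_iff, coe_toEuclideanCLM_eq_toEuclideanLin,
    isPositive_toEuclideanLin_iff]

end Matrix

open Matrix
open scoped Matrix.Norms.L2Operator

/-- For A positive semidefinite, there exists c > 0 depending only on A such that whenever
    0 ≤ B ≤ ρA and ‖ρA − B‖ ≤ ε‖A‖ (spectral norm), one has B ≥ (ρ − εc)A. -/
theorem psd_lower_bound_of_psd {n : ℕ}
    (A : Matrix (Fin n) (Fin n) ℝ) (hA : A.PosSemidef) :
    ∃ c > (0 : ℝ), ∀ (B : Matrix (Fin n) (Fin n) ℝ) (ρ ε : ℝ), 0 < ρ → 0 < ε →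
      B.PosSemidef → (ρ • A - B).PosSemidef → ‖ρ • A - B‖ ≤ ε * ‖A‖ →
      (B - (ρ - ε * c) • A).PosSemidef := by
  obtain ⟨c, hc, h⟩ :=
    ((isPositive_toEuclideanCLM_iff (A := A)).2 hA).exists_pos_isPositive_sub_smul
  refine ⟨c, hc, fun B ρ ε _ _ hB hM hnorm => ?_⟩
  rw [← isPositive_toEuclideanCLM_iff] at hB hM ⊢
  rw [← l2_opNorm_toEuclideanCLM, ← l2_opNorm_toEuclideanCLM] at hnorm
  simpa using h _ ρ ε hB (by simpa using hM) (by simpa using hnorm)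
end

section
/- For the loop gain operator with Γ = I, every eigen-matrix of L corresponding to a nonzero eigenvalue is diagonal, and the nonzero eigenvalues of L are exactly the nonzero eigenvalues of the nonnegative matrix M^∘ = ∑_t M_t^{∘2}; in particular ρ(L) = ρ(M^∘) whenever ρ(L) > 0. -/
/-!
Since `L X = 1 ⊙ S X` with `S X = ∑' t, M t * X * (M t)ᵀ`, every value of `L` is diagonal, so an
eigenmatrix `X = λ⁻¹ • L X` for `λ ≠ 0` is diagonal. On diagonal matrices
`diag (M * diagonal v * Mᵀ) = (M ⊙ M) *ᵥ v`, hence `L (diagonal v) = diagonal (M^∘ *ᵥ v)`, and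
`v ↦ diagonal v` matches the eigenvectors of `M^∘` with the eigenmatrices of `L`. The two spectra
thus agree away from `0`, which does not contribute to a spectral radius.
-/

open Matrix

open scoped ENNReal

theorem Summable.mul_of_summable_sq {ι : Type*} {f g : ι → ℝ}
    (hf : Summable fun i => f i ^ 2) (hg : Summable fun i => g i ^ 2) :
    Summable fun i => f i * g i := by
  refine .of_norm_bounded ((hf.add hg).div_const 2) fun i => ?_
  rw [Real.norm_eq_abs, abs_mul, le_div_iff₀ two_pos, ← sq_abs (f i), ← sq_abs (g i)]
  linarith [two_mul_le_add_sq |f i| |g i|]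

theorem Module.End.mem_spectrum_iff_exists_apply_eq_smul {K V : Type*} [Field K]
    [AddCommGroup V] [Module K V] [FiniteDimensional K V] {f : Module.End K V} {μ : K} :
    μ ∈ spectrum K f ↔ ∃ x ≠ 0, f x = μ • x := by
  rw [← hasEigenvalue_iff_mem_spectrum]
  constructor
  · intro h
    obtain ⟨x, hx⟩ := h.exists_hasEigenvector
    exact ⟨x, hx.2, hx.apply_eq_smul⟩
  · rintro ⟨x, hx0, hx⟩
    exact hasEigenvalue_of_hasEigenvector ⟨mem_eigenspace_iff.2 hx, hx0⟩

theorem spectralRadius_le_of_mem_spectrum_of_ne_zero {𝕜 A B : Type*} [NormedField 𝕜] [Ring A]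
    [Algebra 𝕜 A] [Ring B] [Algebra 𝕜 B] {a : A} {b : B}
    (h : ∀ k ∈ spectrum 𝕜 a, k ≠ 0 → k ∈ spectrum 𝕜 b) :
    spectralRadius 𝕜 a ≤ spectralRadius 𝕜 b := by
  refine iSup₂_le fun k hk => ?_
  rcases eq_or_ne k 0 with rfl | hk0
  · simp
  · exact le_iSup₂ (f := fun k (_ : k ∈ spectrum 𝕜 b) => (‖k‖₊ : ℝ≥0∞)) k (h k hk hk0)

theorem spectralRadius_eq_of_mem_spectrum_iff_of_ne_zero {𝕜 A B : Type*} [NormedField 𝕜]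
    [Ring A] [Algebra 𝕜 A] [Ring B] [Algebra 𝕜 B] {a : A} {b : B}
    (h : ∀ k ≠ 0, k ∈ spectrum 𝕜 a ↔ k ∈ spectrum 𝕜 b) :
    spectralRadius 𝕜 a = spectralRadius 𝕜 b :=
  le_antisymm (spectralRadius_le_of_mem_spectrum_of_ne_zero fun k hk hk0 => (h k hk0).1 hk)
    (spectralRadius_le_of_mem_spectrum_of_ne_zero fun k hk hk0 => (h k hk0).2 hk)

namespace Matrix

variable {m n : Type*} [Fintype n]

theorem mem_spectrum_iff_exists_mulVec_eq_smul {K : Type*} [Field K] [DecidableEq n]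
    (A : Matrix n n K) {μ : K} : μ ∈ spectrum K A ↔ ∃ v ≠ 0, A *ᵥ v = μ • v := by
  rw [← spectrum_toLin', Module.End.mem_spectrum_iff_exists_apply_eq_smul]
  simp only [toLin'_apply]

theorem trace_mul_transpose_self [Fintype m] {R : Type*} [CommSemiring R] (A : Matrix m n R) :
    (A * Aᵀ).trace = ∑ i, ∑ j, A i j ^ 2 := by
  simp only [trace, diag, mul_apply, transpose_apply, sq]

theorem diag_mul_diagonal_mul_transpose {R : Type*} [CommSemiring R] [DecidableEq n]
    (A : Matrix m n R) (v : n → R) : (A * diagonal v * Aᵀ).diag = (A ⊙ A) *ᵥ v := by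
  ext i
  simp only [diag, mul_apply (M := A * diagonal v), mul_diagonal, transpose_apply, mulVec,
    dotProduct, hadamard_apply]
  exact Finset.sum_congr rfl fun k _ => by ring

variable [Fintype m] {β : Type*} {M : β → Matrix m n ℝ}

theorem summable_sq_apply_of_summable_trace (hM : Summable fun t => (M t * (M t)ᵀ).trace)
    (i : m) (j : n) : Summable fun t => M t i j ^ 2 := by
  refine .of_nonneg_of_le (fun t => sq_nonneg _) (fun t => ?_) hM
  rw [trace_mul_transpose_self]
  calc M t i j ^ 2 ≤ ∑ k, M t i k ^ 2 :=
        Finset.single_le_sum (fun k _ => sq_nonneg (M t i k)) (Finset.mem_univ j)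
    _ ≤ ∑ l, ∑ k, M t l k ^ 2 :=
        Finset.single_le_sum (f := fun l => ∑ k, M t l k ^ 2)
          (fun l _ => Finset.sum_nonneg fun k _ => sq_nonneg _) (Finset.mem_univ i)

theorem summable_mul_mul_transpose (hM : Summable fun t => (M t * (M t)ᵀ).trace)
    (X : Matrix n n ℝ) : Summable fun t => M t * X * (M t)ᵀ := by
  have hsq := summable_sq_apply_of_summable_trace hM
  refine Pi.summable.2 fun i => Pi.summable.2 fun j => ?_
  have hentry : ∀ t, (M t * X * (M t)ᵀ) i j = ∑ l, ∑ k, X k l * (M t i k * M t j l) := fun t => by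
    simp only [mul_apply, transpose_apply, Finset.sum_mul]
    exact Finset.sum_congr rfl fun l _ => Finset.sum_congr rfl fun k _ => by ring
  simp only [hentry]
  exact summable_sum fun l _ => summable_sum fun k _ =>
    ((hsq i k).mul_of_summable_sq (hsq j l)).mul_left (X k l)

theorem summable_hadamard_self (hM : Summable fun t => (M t * (M t)ᵀ).trace) :
    Summable fun t => M t ⊙ M t :=
  Pi.summable.2 fun i => Pi.summable.2 fun j =>
    (summable_sq_apply_of_summable_trace hM i j).congr fun t => sq (M t i j)

theorem diag_tsum_mul_diagonal_mul_transpose [DecidableEq n]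
    (hM : Summable fun t => (M t * (M t)ᵀ).trace) (v : n → ℝ) :
    (∑' t, M t * diagonal v * (M t)ᵀ).diag = (∑' t, M t ⊙ M t) *ᵥ v := by
  have hdiag := (summable_mul_mul_transpose hM (diagonal v)).hasSum.matrix_diag
  have hmulVec := (summable_hadamard_self hM).hasSum.map (mulVec.addMonoidHomLeft v)
    (continuous_id.matrix_mulVec continuous_const)
  simp only [diag_mul_diagonal_mul_transpose] at hdiag
  exact hdiag.unique hmulVec

end Matrix

section LoopGain

variable {n : Type*} [Fintype n] [DecidableEq n] {M : ℕ → Matrix n n ℝ}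
  {L : Module.End ℝ (Matrix n n ℝ)}

theorem eq_diagonal_diag_of_loopGain_apply_eq_smul
    (hL : ∀ X, L X = (1 : Matrix n n ℝ) ⊙ ∑' t, M t * X * (M t)ᵀ)
    {lam : ℝ} {X : Matrix n n ℝ} (hlam : lam ≠ 0) (hX : L X = lam • X) :
    X = diagonal X.diag := by
  obtain ⟨d, rfl⟩ : ∃ d, X = diagonal d :=
    ⟨_, by rw [← inv_smul_smul₀ hlam X, ← hX, hL, one_hadamard, ← diagonal_smul]⟩
  rw [diag_diagonal]

theorem loopGain_apply_diagonal
    (hL : ∀ X, L X = (1 : Matrix n n ℝ) ⊙ ∑' t, M t * X * (M t)ᵀ)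
    (hM : Summable fun t => (M t * (M t)ᵀ).trace) (v : n → ℝ) :
    L (diagonal v) = diagonal ((∑' t, M t ⊙ M t) *ᵥ v) := by
  rw [hL, one_hadamard, diag_tsum_mul_diagonal_mul_transpose hM]

theorem exists_loopGain_apply_eq_smul_iff
    (hL : ∀ X, L X = (1 : Matrix n n ℝ) ⊙ ∑' t, M t * X * (M t)ᵀ)
    (hM : Summable fun t => (M t * (M t)ᵀ).trace) {lam : ℝ} (hlam : lam ≠ 0) :
    (∃ X ≠ 0, L X = lam • X) ↔ ∃ v ≠ 0, (∑' t, M t ⊙ M t) *ᵥ v = lam • v := by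
  have hdiag : ∀ v, L (diagonal v) = lam • diagonal v ↔ (∑' t, M t ⊙ M t) *ᵥ v = lam • v :=
    fun v => by rw [loopGain_apply_diagonal hL hM, ← diagonal_smul, diagonal_injective.eq_iff]
  constructor
  · rintro ⟨X, hX0, hX⟩
    rw [eq_diagonal_diag_of_loopGain_apply_eq_smul hL hlam hX] at hX0 hX
    exact ⟨X.diag, fun h => hX0 (diagonal_eq_zero.2 h), (hdiag _).1 hX⟩
  · rintro ⟨v, hv0, hv⟩
    exact ⟨diagonal v, fun h => hv0 (diagonal_eq_zero.1 h), (hdiag v).2 hv⟩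

end LoopGain

/-- For the loop gain operator with Γ = I: every eigen-matrix for a nonzero eigenvalue is
    diagonal; the nonzero eigenvalues of L are exactly the nonzero eigenvalues of
    M^∘ = ∑_t M_t^{∘2}; and ρ(L) = ρ(M^∘) whenever ρ(L) > 0. -/
theorem loopGain_diag_eigen {n : ℕ}
    (M : ℕ → Matrix (Fin n) (Fin n) ℝ)
    (hH2 : Summable (fun t => (M t * (M t)ᵀ).trace))
    (L : Module.End ℝ (Matrix (Fin n) (Fin n) ℝ))
    (hL : ∀ X : Matrix (Fin n) (Fin n) ℝ,
      L X = (1 : Matrix (Fin n) (Fin n) ℝ).hadamard (∑' t : ℕ, M t * X * (M t)ᵀ)) :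
    (∀ (lam : ℝ) (X : Matrix (Fin n) (Fin n) ℝ), lam ≠ 0 → L X = lam • X →
        ∀ i j, i ≠ j → X i j = 0) ∧
    (∀ lam : ℝ, lam ≠ 0 →
      ((∃ X : Matrix (Fin n) (Fin n) ℝ, X ≠ 0 ∧ L X = lam • X) ↔
       (∃ v : Fin n → ℝ, v ≠ 0 ∧ (∑' t : ℕ, (M t).hadamard (M t)) *ᵥ v = lam • v))) ∧
    (spectralRadius ℝ L ≠ 0 →
      spectralRadius ℝ L = spectralRadius ℝ (∑' t : ℕ, (M t).hadamard (M t))) := by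
  have heigen := fun lam (hlam : lam ≠ 0) => exists_loopGain_apply_eq_smul_iff hL hH2 hlam
  refine ⟨fun lam X hlam hX i j hij => ?_, heigen, fun _ => ?_⟩
  · rw [eq_diagonal_diag_of_loopGain_apply_eq_smul hL hlam hX]
    exact diagonal_apply_ne _ hij
  · refine spectralRadius_eq_of_mem_spectrum_iff_of_ne_zero fun k hk => ?_
    rw [Module.End.mem_spectrum_iff_exists_apply_eq_smul, mem_spectrum_iff_exists_mulVec_eq_smul]
    exact heigen k hk
end
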